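/- arXiv:1605.09104 — 4 statements merged into one kernel-verified Lean document; each statement's English description precedes it below -/
import Mathlib

section
/- Let t > 0 and let φ, ψ : [0,t] → ℝ be continuous functions. Suppose that for every τ ∈ [0,t], φ(τ)² ≤ φ(0)² + 2 ∫₀^τ |φ(s)| |ψ(s)| ds. Then |φ(t)| ≤ |φ(0)| + ∫₀ᵗ |ψ(s)| ds. (The integral inequality stated before Lemma 2.2 of the paper.) -/
/-! For `c > 0` the function `v τ = √(c² + 2 ∫₀^τ |φ| |ψ|)` dominates `|φ|` by hypothesis, so
`v' = |φ| |ψ| / v ≤ |ψ|` and hence `v t ≤ c + ∫₀ᵗ |ψ|`. Letting `c` decrease to `|φ 0|` gives the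
claim; the positivity of `c` keeps the square root differentiable. -/

open MeasureTheory Set intervalIntegral

theorem ContinuousOn.hasDerivAt_integral_of_mem_Ioo {E : Type*} [NormedAddCommGroup E]
    [NormedSpace ℝ E] [CompleteSpace E] {f : ℝ → E} {a b x : ℝ}
    (hf : ContinuousOn f (Icc a b)) (hx : x ∈ Ioo a b) :
    HasDerivAt (fun y => ∫ s in a..y, f s) (f x) x := by
  refine integral_hasDerivAt_right ?_ ?_ (hf.continuousAt (Icc_mem_nhds hx.1 hx.2))
  · refine (hf.mono ?_).intervalIntegrable
    rw [uIcc_of_le hx.1.le]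
    exact Icc_subset_Icc_right hx.2.le
  · exact (hf.mono Ioo_subset_Icc_self).stronglyMeasurableAtFilter isOpen_Ioo x hx

theorem ContinuousOn.continuousOn_primitive_Icc {E : Type*} [NormedAddCommGroup E]
    [NormedSpace ℝ E] [CompleteSpace E] {f : ℝ → E} {a b : ℝ}
    (hf : ContinuousOn f (Icc a b)) (hab : a ≤ b) :
    ContinuousOn (fun y => ∫ s in a..y, f s) (Icc a b) := by
  have := continuousOn_primitive_interval (μ := volume) (hf.integrableOn_Icc.mono_set
    (uIcc_of_le hab).subset)
  rwa [uIcc_of_le hab] at this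

section

variable {a b c : ℝ} {φ ψ : ℝ → ℝ}

theorem abs_le_add_integral_abs_of_sq_le_of_pos (hab : a ≤ b) (hc : 0 < c)
    (hφ : ContinuousOn φ (Icc a b)) (hψ : ContinuousOn ψ (Icc a b))
    (hineq : ∀ τ ∈ Icc a b, φ τ ^ 2 ≤ c ^ 2 + 2 * ∫ s in a..τ, |φ s| * |ψ s|) :
    |φ b| ≤ c + ∫ s in a..b, |ψ s| := by
  set G : ℝ → ℝ := fun τ => ∫ s in a..τ, |φ s| * |ψ s|
  set v : ℝ → ℝ := fun τ => √(c ^ 2 + 2 * G τ)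
  have hg : ContinuousOn (fun s => |φ s| * |ψ s|) (Icc a b) := hφ.abs.mul hψ.abs
  have hradicand_pos : ∀ τ ∈ Icc a b, 0 < c ^ 2 + 2 * G τ := fun τ hτ => by
    have : 0 ≤ G τ := integral_nonneg hτ.1 fun s _ => by positivity
    positivity
  have habs_le : ∀ τ ∈ Icc a b, |φ τ| ≤ v τ := fun τ hτ => Real.abs_le_sqrt (hineq τ hτ)
  have hv_cont : ContinuousOn v (Icc a b) :=
    (continuousOn_const.add (continuousOn_const.mul (hg.continuousOn_primitive_Icc hab))).sqrt
  have hv_deriv : ∀ τ ∈ Ioo a b, HasDerivAt v (|φ τ| * |ψ τ| / v τ) τ := fun τ hτ => by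
    have hG := hg.hasDerivAt_integral_of_mem_Ioo hτ
    refine (((hG.const_mul 2).const_add (c ^ 2)).sqrt
      (hradicand_pos τ (Ioo_subset_Icc_self hτ)).ne').congr_deriv ?_
    simp only [v, G]
    field_simp
  have hv_deriv_le : ∀ τ ∈ Ioo a b, |φ τ| * |ψ τ| / v τ ≤ |ψ τ| := fun τ hτ => by
    have hτ' := Ioo_subset_Icc_self hτ
    rw [div_le_iff₀ (Real.sqrt_pos.2 (hradicand_pos τ hτ')), mul_comm |ψ τ|]
    exact mul_le_mul_of_nonneg_right (habs_le τ hτ') (abs_nonneg _)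
  have hv_le := sub_le_integral_of_hasDeriv_right_of_le hab hv_cont
    (fun τ hτ => (hv_deriv τ hτ).hasDerivWithinAt) hψ.abs.integrableOn_Icc hv_deriv_le
  have hv_a : v a = c := by simp [v, G, hc.le]
  calc |φ b| ≤ v b := habs_le b (right_mem_Icc.2 hab)
    _ ≤ c + ∫ s in a..b, |ψ s| := by linarith

theorem abs_le_add_integral_abs_of_sq_le (hab : a ≤ b) (hc : 0 ≤ c)
    (hφ : ContinuousOn φ (Icc a b)) (hψ : ContinuousOn ψ (Icc a b))
    (hineq : ∀ τ ∈ Icc a b, φ τ ^ 2 ≤ c ^ 2 + 2 * ∫ s in a..τ, |φ s| * |ψ s|) :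
    |φ b| ≤ c + ∫ s in a..b, |ψ s| := by
  refine le_of_forall_pos_le_add fun ε hε => ?_
  have := abs_le_add_integral_abs_of_sq_le_of_pos hab (by positivity : 0 < c + ε) hφ hψ
    fun τ hτ => (hineq τ hτ).trans (by gcongr; linarith)
  linarith

end

theorem stmt_8 (t : ℝ) (ht : 0 < t) (φ ψ : ℝ → ℝ)
    (hφ : ContinuousOn φ (Icc 0 t)) (hψ : ContinuousOn ψ (Icc 0 t))
    (hineq : ∀ τ ∈ Icc (0:ℝ) t,
      φ τ ^ 2 ≤ φ 0 ^ 2 + 2 * ∫ s in (0:ℝ)..τ, |φ s| * |ψ s|) :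
    |φ t| ≤ |φ 0| + ∫ s in (0:ℝ)..t, |ψ s| :=
  abs_le_add_integral_abs_of_sq_le ht.le (abs_nonneg _) hφ hψ fun τ hτ => by
    simpa only [sq_abs] using hineq τ hτ
end

section
/- Let T > 0, let H be a real Hilbert space with inner product ⟪·,·⟫ and norm ‖·‖, and let A : H × H → ℝ be a continuous bilinear form. Let v : [0,T] → H be continuously differentiable and let w, g : [0,T] → H be continuous. Assume: (i) for all t ∈ (0,T] and all χ ∈ H, ⟪v'(t), χ⟫ + A(g(t), χ) = ⟪w(t), χ⟫; and (ii) for all t ∈ [0,T], ∫₀ᵗ A(g(s), v(s)) ds ≥ 0. Then for every t ∈ [0,T], ‖v(t)‖ ≤ ‖v(0)‖ + ∫₀ᵗ ‖w(s)‖ ds. (Lemma 2.2 of the paper with κ = 0; there g = 𝓑^α v is the fractional derivative ∂_t^{1−α} v or the fractional integral 𝓘^α v, and hypothesis (ii) is the positivity property of these operators with respect to the positive-definite bilinear form A.) -/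
open MeasureTheory Set intervalIntegral
open scoped RealInnerProductSpace

/-!
Testing the equation with `χ = v(s)` gives `½ d/ds ‖v‖² = ⟪w, v⟫ - A(g, v)`, so by the positivity
of `∫ A(g, v)` and Cauchy–Schwarz, `‖v t‖² ≤ ‖v 0‖² + 2 ∫₀ᵗ ‖w‖ ‖v‖`. A Gronwall argument for the
square root turns this into the bound: for `c > ‖v 0‖`, the function
`√(c² + 2 ∫₀^τ ‖w‖ ‖v‖) - ∫₀^τ ‖w‖` has nonpositive derivative, because `‖v‖` is below the square
root.
-/

section Primitive

variable {E : Type*} [NormedAddCommGroup E] [NormedSpace ℝ E]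
  {f : ℝ → E} {a b : ℝ}

theorem continuousOn_primitive_of_continuousOn_Icc (hab : a ≤ b) (hf : ContinuousOn f (Icc a b)) :
    ContinuousOn (fun x => ∫ s in a..x, f s) (Icc a b) := by
  rw [← uIcc_of_le hab] at hf ⊢
  exact continuousOn_primitive_interval (hf.integrableOn_compact isCompact_uIcc)

theorem hasDerivAt_primitive_of_continuousOn_Icc [CompleteSpace E]
    (hf : ContinuousOn f (Icc a b)) {x : ℝ} (hx : x ∈ Ioo a b) :
    HasDerivAt (fun τ => ∫ s in a..τ, f s) (f x) x :=
  integral_hasDerivAt_right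
    ((hf.mono (Icc_subset_Icc le_rfl hx.2.le)).intervalIntegrable_of_Icc hx.1.le)
    ((hf.mono Ioo_subset_Icc_self).stronglyMeasurableAtFilter isOpen_Ioo x hx)
    (hf.continuousAt (Icc_mem_nhds hx.1 hx.2))

end Primitive

theorem le_add_integral_of_sq_le_sq_add_two_mul_integral {u f : ℝ → ℝ} {a t : ℝ} (ha : 0 ≤ a)
    (ht : 0 ≤ t) (hu : ContinuousOn u (Icc 0 t)) (hf : ContinuousOn f (Icc 0 t))
    (hf₀ : ∀ s ∈ Icc 0 t, 0 ≤ f s)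
    (hsq : ∀ τ ∈ Icc 0 t, u τ ^ 2 ≤ a ^ 2 + 2 * ∫ s in 0..τ, f s * u s) :
    u t ≤ a + ∫ s in 0..t, f s := by
  refine le_of_forall_pos_le_add fun ε hε => ?_
  -- `a + ε` instead of `a` keeps `E` above `u² ≥ 0`, so `√E` is differentiable
  set E : ℝ → ℝ := fun τ => (a + ε) ^ 2 + 2 * ∫ s in 0..τ, f s * u s
  have hu_lt : ∀ τ ∈ Icc 0 t, u τ ^ 2 < E τ := fun τ hτ => by
    have := hsq τ hτ
    simp only [E]
    nlinarith
  have hE_pos : ∀ τ ∈ Icc 0 t, 0 < E τ := fun τ hτ => (sq_nonneg _).trans_lt (hu_lt τ hτ)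
  have hu_le : ∀ τ ∈ Icc 0 t, u τ ≤ √(E τ) := fun τ hτ => Real.le_sqrt_of_sq_le (hu_lt τ hτ).le
  set F : ℝ → ℝ := fun τ => √(E τ) - ∫ s in 0..τ, f s
  have hfu := hf.mul hu
  have hF_cont : ContinuousOn F (Icc 0 t) :=
    ((continuousOn_const.add (continuousOn_const.mul
      (continuousOn_primitive_of_continuousOn_Icc ht hfu))).sqrt).sub
      (continuousOn_primitive_of_continuousOn_Icc ht hf)
  have hF_anti : AntitoneOn F (Icc 0 t) := by
    refine antitoneOn_of_hasDerivWithinAt_nonpos (convex_Icc 0 t) hF_cont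
      (f' := fun x => 2 * (f x * u x) / (2 * √(E x)) - f x) (fun x hx => ?_) (fun x hx => ?_)
      <;> rw [interior_Icc] at hx
    · have hE' := ((hasDerivAt_primitive_of_continuousOn_Icc hfu hx).const_mul 2).const_add
        ((a + ε) ^ 2)
      exact ((hE'.sqrt (hE_pos x (Ioo_subset_Icc_self hx)).ne').sub
        (hasDerivAt_primitive_of_continuousOn_Icc hf hx)).hasDerivWithinAt
    · have hx' := Ioo_subset_Icc_self hx
      rw [sub_nonpos, mul_div_mul_left _ _ two_ne_zero,
        div_le_iff₀ (Real.sqrt_pos.2 (hE_pos x hx'))]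
      exact mul_le_mul_of_nonneg_left (hu_le x hx') (hf₀ x hx')
  have hF0 : F 0 = a + ε := by
    simp only [F, E, integral_same, mul_zero, add_zero, sub_zero]
    exact Real.sqrt_sq (by positivity)
  have hFt := hF_anti (left_mem_Icc.2 ht) (right_mem_Icc.2 ht) ht
  linarith [hu_le t (right_mem_Icc.2 ht)]

section Energy

variable {H : Type*} [NormedAddCommGroup H] [InnerProductSpace ℝ H] {v v' : ℝ → H} {t : ℝ}

theorem norm_sq_eq_add_two_mul_integral_inner_deriv (ht : 0 ≤ t)
    (hv : ∀ s ∈ Icc 0 t, HasDerivAt v (v' s) s) (hv' : ContinuousOn v' (Icc 0 t)) :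
    ‖v t‖ ^ 2 = ‖v 0‖ ^ 2 + 2 * ∫ s in 0..t, ⟪v s, v' s⟫ := by
  have hvc : ContinuousOn v (Icc 0 t) := fun s hs => (hv s hs).continuousAt.continuousWithinAt
  rw [← intervalIntegral.integral_const_mul,
    integral_eq_sub_of_hasDerivAt (f := (‖v ·‖ ^ 2))]
  · ring
  · intro s hs
    rw [uIcc_of_le ht] at hs
    exact (hv s hs).norm_sq
  · exact ((hvc.inner hv').const_smul (2 : ℝ)).intervalIntegrable_of_Icc ht

theorem norm_sq_le_of_inner_deriv_add_eq {A : H →L[ℝ] H →L[ℝ] ℝ} {w g : ℝ → H} (ht : 0 ≤ t)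
    (hv : ∀ s ∈ Icc 0 t, HasDerivAt v (v' s) s) (hv' : ContinuousOn v' (Icc 0 t))
    (hw : ContinuousOn w (Icc 0 t)) (hg : ContinuousOn g (Icc 0 t))
    (heq : ∀ s ∈ Ioc 0 t, ∀ χ : H, ⟪v' s, χ⟫ + A (g s) χ = ⟪w s, χ⟫)
    (hpos : 0 ≤ ∫ s in 0..t, A (g s) (v s)) :
    ‖v t‖ ^ 2 ≤ ‖v 0‖ ^ 2 + 2 * ∫ s in 0..t, ‖w s‖ * ‖v s‖ := by
  have hvc : ContinuousOn v (Icc 0 t) := fun s hs => (hv s hs).continuousAt.continuousWithinAt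
  have hwv : IntervalIntegrable (fun s => ⟪w s, v s⟫) volume 0 t :=
    (hw.inner hvc).intervalIntegrable_of_Icc ht
  have hgv : IntervalIntegrable (fun s => A (g s) (v s)) volume 0 t :=
    (A.continuous₂.comp_continuousOn (hg.prodMk hvc)).intervalIntegrable_of_Icc ht
  have h_energy : ∫ s in 0..t, ⟪v s, v' s⟫ = ∫ s in 0..t, ⟪w s, v s⟫ - A (g s) (v s) := by
    refine integral_congr_ae (ae_of_all _ fun s hs => ?_)
    rw [uIoc_of_le ht] at hs
    rw [real_inner_comm, ← heq s hs (v s)]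
    ring
  have h_cauchySchwarz : ∫ s in 0..t, ⟪w s, v s⟫ ≤ ∫ s in 0..t, ‖w s‖ * ‖v s‖ :=
    integral_mono_on ht hwv ((hw.norm.mul hvc.norm).intervalIntegrable_of_Icc ht)
      fun s _ => real_inner_le_norm _ _
  rw [norm_sq_eq_add_two_mul_integral_inner_deriv ht hv hv', h_energy, integral_sub hwv hgv]
  linarith

end Energy

theorem stmt_9_general {H : Type*} [NormedAddCommGroup H] [InnerProductSpace ℝ H]
    (T : ℝ)
    (A : H →L[ℝ] H →L[ℝ] ℝ)
    (v v' w g : ℝ → H)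
    (hv : ∀ t ∈ Icc (0:ℝ) T, HasDerivAt v (v' t) t)
    (hv' : ContinuousOn v' (Icc 0 T))
    (hw : ContinuousOn w (Icc 0 T))
    (hg : ContinuousOn g (Icc 0 T))
    (heq : ∀ t ∈ Ioc (0:ℝ) T, ∀ χ : H, ⟪v' t, χ⟫ + A (g t) χ = ⟪w t, χ⟫)
    (hpos : ∀ t ∈ Icc (0:ℝ) T, 0 ≤ ∫ s in (0:ℝ)..t, A (g s) (v s)) :
    ∀ t ∈ Icc (0:ℝ) T, ‖v t‖ ≤ ‖v 0‖ + ∫ s in (0:ℝ)..t, ‖w s‖ := by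
  intro t ht
  have hvc : ContinuousOn v (Icc 0 T) := fun s hs => (hv s hs).continuousAt.continuousWithinAt
  have ht_sub : Icc 0 t ⊆ Icc 0 T := Icc_subset_Icc le_rfl ht.2
  refine le_add_integral_of_sq_le_sq_add_two_mul_integral (norm_nonneg _) ht.1
    (hvc.mono ht_sub).norm (hw.mono ht_sub).norm (fun s _ => norm_nonneg _) fun τ hτ => ?_
  have hτ_sub : Icc 0 τ ⊆ Icc 0 T := (Icc_subset_Icc le_rfl hτ.2).trans ht_sub
  exact norm_sq_le_of_inner_deriv_add_eq hτ.1 (fun s hs => hv s (hτ_sub hs)) (hv'.mono hτ_sub)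
    (hw.mono hτ_sub) (hg.mono hτ_sub) (fun s hs => heq s ⟨hs.1, hs.2.trans (hτ.2.trans ht.2)⟩)
    (hpos τ (ht_sub hτ))

theorem stmt_9 {H : Type*} [NormedAddCommGroup H] [InnerProductSpace ℝ H] [CompleteSpace H]
    (T : ℝ) (hT : 0 < T)
    (A : H →L[ℝ] H →L[ℝ] ℝ)
    (v v' w g : ℝ → H)
    (hv : ∀ t ∈ Icc (0:ℝ) T, HasDerivAt v (v' t) t)
    (hv' : ContinuousOn v' (Icc 0 T))
    (hw : ContinuousOn w (Icc 0 T))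
    (hg : ContinuousOn g (Icc 0 T))
    (heq : ∀ t ∈ Ioc (0:ℝ) T, ∀ χ : H, ⟪v' t, χ⟫ + A (g t) χ = ⟪w t, χ⟫)
    (hpos : ∀ t ∈ Icc (0:ℝ) T, 0 ≤ ∫ s in (0:ℝ)..t, A (g s) (v s)) :
    ∀ t ∈ Icc (0:ℝ) T, ‖v t‖ ≤ ‖v 0‖ + ∫ s in (0:ℝ)..t, ‖w s‖ :=
  stmt_9_general T A v v' w g hv hv' hw hg heq hpos
end

section
/- Let T > 0, let H be a real Hilbert space with inner product ⟪·,·⟫ and norm ‖·‖, and let A : H × H → ℝ be a continuous bilinear form. Let v, w, g : [0,T] → H be continuous. Assume: (i) for all t ∈ [0,T] and all χ ∈ H, ⟪v(t), χ⟫ + A(g(t), χ) = ⟪w(t), χ⟫; and (ii) for all t ∈ [0,T], ∫₀ᵗ A(g(s), v(s)) ds ≥ 0. Then for every t ∈ [0,T], ∫₀ᵗ ‖v(s)‖² ds ≤ ∫₀ᵗ ‖w(s)‖² ds. (Lemma 2.2 of the paper with κ = 1; there g = 𝓘^α v and hypothesis (ii) is the positivity property of the fractional integral with respect to the positive-definite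 bilinear form A.) -/
open MeasureTheory Set
open scoped RealInnerProductSpace

/-!
Testing the identity `⟪v, χ⟫ + A(g, χ) = ⟪w, χ⟫` against `χ = v` gives pointwise
`‖w‖² - ‖v‖² - 2 A(g, v) = ‖w - v‖² ≥ 0`; integrating over `[0, t]` and using the positivity of
`∫₀ᵗ A(g, v)` yields the energy estimate.
-/

section EnergyEstimate

variable {H : Type*} [NormedAddCommGroup H] [InnerProductSpace ℝ H]

lemma norm_sq_le_norm_sq_sub_two_mul_of_inner_self_add_eq {v w : H} {k : ℝ}
    (h : ⟪v, v⟫ + k = ⟪w, v⟫) : ‖v‖ ^ 2 ≤ ‖w‖ ^ 2 - 2 * k := by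
  have hdist : ‖w - v‖ ^ 2 = ‖w‖ ^ 2 - 2 * ⟪w, v⟫ + ‖v‖ ^ 2 := norm_sub_sq_real w v
  rw [real_inner_self_eq_norm_sq] at h
  nlinarith [sq_nonneg ‖w - v‖]

lemma integral_norm_sq_le_of_inner_self_add_eq {a b : ℝ} (hab : a ≤ b) {v w : ℝ → H} {k : ℝ → ℝ}
    (hv : ContinuousOn v (Icc a b)) (hw : ContinuousOn w (Icc a b))
    (heq : ∀ s ∈ Icc a b, ⟪v s, v s⟫ + k s = ⟪w s, v s⟫)
    (hk : 0 ≤ ∫ s in a..b, k s) :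
    ∫ s in a..b, ‖v s‖ ^ 2 ≤ ∫ s in a..b, ‖w s‖ ^ 2 := by
  have hv2 : IntervalIntegrable (fun s => ‖v s‖ ^ 2) volume a b :=
    (hv.norm.pow 2).intervalIntegrable_of_Icc hab
  have hw2 : IntervalIntegrable (fun s => ‖w s‖ ^ 2) volume a b :=
    (hw.norm.pow 2).intervalIntegrable_of_Icc hab
  have hk_eq : EqOn (fun s => ⟪w s, v s⟫ - ⟪v s, v s⟫) k (Icc a b) := fun s hs => by
    simp only [← heq s hs, add_sub_cancel_left]
  have hki : IntervalIntegrable k volume a b :=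
    (((hw.inner hv).sub (hv.inner hv)).congr hk_eq.symm).intervalIntegrable_of_Icc hab
  calc ∫ s in a..b, ‖v s‖ ^ 2
      ≤ ∫ s in a..b, (‖w s‖ ^ 2 - 2 * k s) :=
        intervalIntegral.integral_mono_on hab hv2 (hw2.sub (hki.const_mul 2))
          fun s hs => norm_sq_le_norm_sq_sub_two_mul_of_inner_self_add_eq (heq s hs)
    _ = (∫ s in a..b, ‖w s‖ ^ 2) - 2 * ∫ s in a..b, k s := by
        rw [intervalIntegral.integral_sub hw2 (hki.const_mul 2),
          intervalIntegral.integral_const_mul]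
    _ ≤ ∫ s in a..b, ‖w s‖ ^ 2 := by linarith

end EnergyEstimate

theorem stmt_10_general {H : Type*} [NormedAddCommGroup H] [InnerProductSpace ℝ H]
    (T : ℝ)
    (A : H →L[ℝ] H →L[ℝ] ℝ)
    (v w g : ℝ → H)
    (hv : ContinuousOn v (Icc 0 T))
    (hw : ContinuousOn w (Icc 0 T))
    (heq : ∀ t ∈ Icc (0:ℝ) T, ∀ χ : H, ⟪v t, χ⟫ + A (g t) χ = ⟪w t, χ⟫)
    (hpos : ∀ t ∈ Icc (0:ℝ) T, 0 ≤ ∫ s in (0:ℝ)..t, A (g s) (v s)) :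
    ∀ t ∈ Icc (0:ℝ) T,
      ∫ s in (0:ℝ)..t, ‖v s‖ ^ 2 ≤ ∫ s in (0:ℝ)..t, ‖w s‖ ^ 2 := by
  intro t ht
  have hsub : Icc 0 t ⊆ Icc 0 T := Icc_subset_Icc le_rfl ht.2
  exact integral_norm_sq_le_of_inner_self_add_eq ht.1 (hv.mono hsub) (hw.mono hsub)
    (fun s hs => heq s (hsub hs) (v s)) (hpos t ht)

theorem stmt_10 {H : Type*} [NormedAddCommGroup H] [InnerProductSpace ℝ H] [CompleteSpace H]
    (T : ℝ) (hT : 0 < T)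
    (A : H →L[ℝ] H →L[ℝ] ℝ)
    (v w g : ℝ → H)
    (hv : ContinuousOn v (Icc 0 T))
    (hw : ContinuousOn w (Icc 0 T))
    (hg : ContinuousOn g (Icc 0 T))
    (heq : ∀ t ∈ Icc (0:ℝ) T, ∀ χ : H, ⟪v t, χ⟫ + A (g t) χ = ⟪w t, χ⟫)
    (hpos : ∀ t ∈ Icc (0:ℝ) T, 0 ≤ ∫ s in (0:ℝ)..t, A (g s) (v s)) :
    ∀ t ∈ Icc (0:ℝ) T,
      ∫ s in (0:ℝ)..t, ‖v s‖ ^ 2 ≤ ∫ s in (0:ℝ)..t, ‖w s‖ ^ 2 :=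
  stmt_10_general T A v w g hv hw heq hpos
end

section
/- Let 0 < α < 1, T > 0, let H be a real Hilbert space with inner product ⟪·,·⟫ and norm ‖·‖, and let A : H × H → ℝ be a continuous bilinear form. Let θ, ρ : [0,T] → H be continuous functions. Assume: (i) for all t ∈ [0,T] and all χ ∈ H, ⟪θ(t), χ⟫ + A(𝓘^α θ(t), χ) = ⟪ρ(t), χ⟫; and (ii) for every continuous ψ : [0,T] → H and every t ∈ [0,T], ∫₀ᵗ A(𝓘^α ψ(s), ψ(s)) ds ≥ 0. Then for every t ∈ [0,T], ∫₀ᵗ s² ‖θ(s)‖² ds ≤ 3 ∫₀ᵗ ( s² ‖ρ(s)‖² + 2 (∫₀ˢ ‖ρ(r)‖ dr)² ) ds. (Lemma 4.2 of the paper.) -/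
/-!
Write `Θ`, `R` for the primitives of `θ`, `ρ`. Fubini on the triangle `0 < r < s < t` gives
`∫₀ˢ 𝓘^α θ = 𝓘^α Θ(s) = 𝓘^{α+1} θ(s)`, so integrating (i) over `[0, s]` yields
`A(𝓘^{α+1} θ(s), χ) = ⟪R(s) - Θ(s), χ⟫`. Testing (ii) with `ψ = Θ` then bounds `∫ ‖Θ‖²` by
`∫ ‖R‖²`. Testing (ii) with `ψ(s) = s θ(s)`, for which `s 𝓘^α θ(s) = 𝓘^α ψ(s) + α 𝓘^{α+1} θ(s)`,
and (i) with `χ = s θ(s)` gives `∫ s² ‖θ‖² ≤ ∫ (s² ⟪ρ, θ⟫ - α s ⟪R - Θ, θ⟫)`; Cauchy–Schwarz and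
Young's inequality (using `α ≤ 1`) together with the bound on `Θ` give the claim.
-/

open MeasureTheory Set
open scoped RealInnerProductSpace

/-- Riemann–Liouville fractional integral of order `α` of a
Banach-space-valued function `φ`. -/
noncomputable def RL {H : Type*} [NormedAddCommGroup H] [NormedSpace ℝ H]
    (α : ℝ) (φ : ℝ → H) (t : ℝ) : H :=
  ∫ s in (0:ℝ)..t, (((t - s) ^ (α - 1)) / Real.Gamma α) • φ s

def triangle (t : ℝ) : Set (ℝ × ℝ) := {p | 0 < p.2 ∧ p.2 < p.1 ∧ p.1 < t}

lemma measurableSet_triangle (t : ℝ) : MeasurableSet (triangle t) :=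
  (measurableSet_lt measurable_const measurable_snd).inter
    ((measurableSet_lt measurable_snd measurable_fst).inter
      (measurableSet_lt measurable_fst measurable_const))

section Indicator

variable {M : Type*} [Zero M]

lemma indicator_triangle_eq_fst (t : ℝ) (f : ℝ × ℝ → M) (s r : ℝ) :
    (triangle t).indicator f (s, r) =
      (Ioo 0 t).indicator (fun s => (Ioo 0 s).indicator (fun r => f (s, r)) r) s := by
  simp only [indicator_apply, mem_Ioo, triangle, mem_ofPred_eq]
  split_ifs <;> first | rfl | (exfalso; grind)

lemma indicator_triangle_eq_snd (t : ℝ) (f : ℝ × ℝ → M) (s r : ℝ) :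
    (triangle t).indicator f (s, r) =
      (Ioo 0 t).indicator (fun r => (Ioo r t).indicator (fun s => f (s, r)) s) r := by
  simp only [indicator_apply, mem_Ioo, triangle, mem_ofPred_eq]
  split_ifs <;> first | rfl | (exfalso; grind)

end Indicator

section Triangle

variable {E : Type*} [NormedAddCommGroup E] [NormedSpace ℝ E]

lemma integral_indicator_triangle_fst (t : ℝ) (f : ℝ × ℝ → E) (s : ℝ) :
    ∫ r, (triangle t).indicator f (s, r) =
      (Ioo 0 t).indicator (fun s => ∫ r in Ioo 0 s, f (s, r)) s := by
  simp_rw [indicator_triangle_eq_fst]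
  by_cases hs : s ∈ Ioo 0 t
  · simp only [indicator_of_mem hs, integral_indicator measurableSet_Ioo]
  · simp only [indicator_of_notMem hs, integral_zero]

lemma integral_indicator_triangle_snd (t : ℝ) (f : ℝ × ℝ → E) (r : ℝ) :
    ∫ s, (triangle t).indicator f (s, r) =
      (Ioo 0 t).indicator (fun r => ∫ s in Ioo r t, f (s, r)) r := by
  simp_rw [indicator_triangle_eq_snd]
  by_cases hr : r ∈ Ioo 0 t
  · simp only [indicator_of_mem hr, integral_indicator measurableSet_Ioo]
  · simp only [indicator_of_notMem hr, integral_zero]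

variable {K : ℝ → ℝ → ℝ} {g : ℝ → ℝ} {φ : ℝ → E} {t : ℝ}

lemma integrable_indicator_triangle (hK : Measurable (Function.uncurry K))
    (hK0 : ∀ ⦃s r⦄, 0 < r → r < s → s < t → 0 ≤ K s r)
    (hKi : ∀ r ∈ Ioo 0 t, IntegrableOn (K · r) (Ioo r t))
    (hKg : ∀ r ∈ Ioo 0 t, ∫ s in Ioo r t, K s r = g r)
    (hg : ContinuousOn g (Icc 0 t)) (hφ : Continuous φ) :
    Integrable ((triangle t).indicator fun p => K p.1 p.2 • φ p.2) (volume.prod volume) := by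
  have hmeas : AEStronglyMeasurable ((triangle t).indicator fun p => K p.1 p.2 • φ p.2)
      (volume.prod volume) :=
    (hK.aestronglyMeasurable.smul (hφ.comp continuous_snd).aestronglyMeasurable).indicator
      (measurableSet_triangle t)
  have hnorm : (fun r => ∫ s, ‖(triangle t).indicator (fun p => K p.1 p.2 • φ p.2) (s, r)‖) =
      (Ioo 0 t).indicator fun r => g r * ‖φ r‖ := by
    ext r
    simp_rw [norm_indicator_eq_indicator_norm, integral_indicator_triangle_snd]
    refine congrFun (indicator_congr fun r hr => ?_) r
    rw [← hKg r hr, ← integral_mul_const]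
    refine setIntegral_congr_fun measurableSet_Ioo fun s hs => ?_
    rw [norm_smul, Real.norm_of_nonneg (hK0 hr.1 hs.1 hs.2)]
  rw [integrable_prod_iff' hmeas, hnorm, integrable_indicator_iff measurableSet_Ioo]
  refine ⟨Filter.Eventually.of_forall fun r => ?_,
    ((hg.mul hφ.norm.continuousOn).integrableOn_Icc).mono_set Ioo_subset_Icc_self⟩
  simp_rw [indicator_triangle_eq_snd]
  by_cases hr : r ∈ Ioo 0 t
  · simp only [indicator_of_mem hr]
    exact (integrable_indicator_iff measurableSet_Ioo).2 ((hKi r hr).smul_const (φ r))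
  · simp only [indicator_of_notMem hr]
    exact integrable_zero ℝ E volume

lemma integral_integral_triangle_swap [CompleteSpace E] (ht : 0 ≤ t)
    (hK : Measurable (Function.uncurry K))
    (hK0 : ∀ ⦃s r⦄, 0 < r → r < s → s < t → 0 ≤ K s r)
    (hKi : ∀ r ∈ Ioo 0 t, IntervalIntegrable (K · r) volume r t)
    (hKg : ∀ r ∈ Ioo 0 t, ∫ s in r..t, K s r = g r)
    (hg : ContinuousOn g (Icc 0 t)) (hφ : Continuous φ) :
    IntervalIntegrable (fun s => ∫ r in 0..s, K s r • φ r) volume 0 t ∧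
      ∫ s in 0..t, ∫ r in 0..s, K s r • φ r = ∫ r in 0..t, g r • φ r := by
  have hKg' : ∀ r ∈ Ioo 0 t, ∫ s in Ioo r t, K s r = g r := fun r hr => by
    rw [← hKg r hr, intervalIntegral.integral_of_le hr.2.le, integral_Ioc_eq_integral_Ioo]
  have hint := integrable_indicator_triangle hK hK0
    (fun r hr => (intervalIntegrable_iff_integrableOn_Ioo_of_le hr.2.le).1 (hKi r hr))
    hKg' hg hφ
  have hfst : ∀ s ∈ Ioo 0 t, ∫ r in Ioo 0 s, K s r • φ r = ∫ r in 0..s, K s r • φ r :=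
    fun s hs => by rw [intervalIntegral.integral_of_le hs.1.le, integral_Ioc_eq_integral_Ioo]
  constructor
  · have := hint.integral_prod_left
    simp_rw [integral_indicator_triangle_fst, integrable_indicator_iff measurableSet_Ioo] at this
    rw [intervalIntegrable_iff_integrableOn_Ioo_of_le ht]
    exact this.congr_fun (fun s hs => hfst s hs) measurableSet_Ioo
  · have := integral_integral_swap (f := fun s r => (triangle t).indicator
      (fun p => K p.1 p.2 • φ p.2) (s, r)) hint
    simp_rw [integral_indicator_triangle_fst, integral_indicator_triangle_snd,
      integral_indicator measurableSet_Ioo] at this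
    rw [intervalIntegral.integral_of_le ht, intervalIntegral.integral_of_le ht,
      integral_Ioc_eq_integral_Ioo, integral_Ioc_eq_integral_Ioo,
      ← setIntegral_congr_fun measurableSet_Ioo hfst, this]
    refine setIntegral_congr_fun measurableSet_Ioo fun r hr => ?_
    rw [integral_smul_const, hKg' r hr]

end Triangle

/-- The paper's `ω_α`. -/
noncomputable def rlKernel (α x : ℝ) : ℝ := x ^ (α - 1) / Real.Gamma α

section Kernel

variable {α : ℝ}

lemma RL_eq_integral_rlKernel {E : Type*} [NormedAddCommGroup E] [NormedSpace ℝ E]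
    (φ : ℝ → E) (t : ℝ) : RL α φ t = ∫ s in 0..t, rlKernel α (t - s) • φ s := rfl

lemma rlKernel_nonneg (hα : 0 < α) {x : ℝ} (hx : 0 ≤ x) : 0 ≤ rlKernel α x :=
  div_nonneg (Real.rpow_nonneg hx _) (Real.Gamma_pos_of_pos hα).le

lemma continuous_rlKernel_add_one (hα : 0 ≤ α) : Continuous (rlKernel (α + 1)) := by
  unfold rlKernel
  simp_rw [add_sub_cancel_right]
  exact (Real.continuous_rpow_const hα).div_const _

lemma measurable_rlKernel : Measurable (rlKernel α) :=
  (measurable_id.pow_const _).div_const _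

lemma intervalIntegrable_rlKernel (hα : 0 < α) (a b : ℝ) :
    IntervalIntegrable (rlKernel α) volume a b :=
  (intervalIntegral.intervalIntegrable_rpow' (by linarith)).div_const _

lemma integral_rlKernel (hα : 0 < α) (x : ℝ) :
    ∫ y in 0..x, rlKernel α y = rlKernel (α + 1) x := by
  simp only [rlKernel, intervalIntegral.integral_div, add_sub_cancel_right,
    Real.Gamma_add_one hα.ne']
  rw [integral_rpow (Or.inl (by linarith)), sub_add_cancel, Real.zero_rpow hα.ne', sub_zero,
    div_div, mul_comm]

lemma mul_rlKernel (hα : 0 < α) {x : ℝ} (hx : 0 ≤ x) :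
    x * rlKernel α x = α * rlKernel (α + 1) x := by
  simp only [rlKernel, add_sub_cancel_right, Real.Gamma_add_one hα.ne']
  rw [← mul_div_assoc, mul_comm x, ← Real.rpow_add_one' hx (by linarith), sub_add_cancel]
  field_simp [hα.ne', (Real.Gamma_pos_of_pos hα).ne']

lemma intervalIntegrable_rlKernel_sub_left (hα : 0 < α) (t a b : ℝ) :
    IntervalIntegrable (fun s => rlKernel α (t - s)) volume a b := by
  simpa using (intervalIntegrable_rlKernel hα (t - a) (t - b)).comp_sub_left t

lemma intervalIntegrable_rlKernel_sub_right (hα : 0 < α) (r a b : ℝ) :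
    IntervalIntegrable (fun s => rlKernel α (s - r)) volume a b := by
  simpa using (intervalIntegrable_rlKernel hα (a - r) (b - r)).comp_sub_right r

lemma integral_rlKernel_sub_left (hα : 0 < α) (r t : ℝ) :
    ∫ s in r..t, rlKernel α (t - s) = rlKernel (α + 1) (t - r) := by
  rw [intervalIntegral.integral_comp_sub_left (rlKernel α), sub_self, integral_rlKernel hα]

lemma integral_rlKernel_sub_right (hα : 0 < α) (r t : ℝ) :
    ∫ s in r..t, rlKernel α (s - r) = rlKernel (α + 1) (t - r) := by
  rw [intervalIntegral.integral_comp_sub_right (rlKernel α), sub_self, integral_rlKernel hα]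

end Kernel

section RiemannLiouville

variable {E : Type*} [NormedAddCommGroup E] [NormedSpace ℝ E] {α : ℝ} {φ : ℝ → E} {t : ℝ}

lemma intervalIntegrable_rlKernel_smul (hα : 0 < α) (hφ : Continuous φ) (t a b : ℝ) :
    IntervalIntegrable (fun s => rlKernel α (t - s) • φ s) volume a b :=
  (intervalIntegrable_rlKernel_sub_left hα t a b).smul_continuousOn hφ.continuousOn

lemma RL_congr {ψ : ℝ → E} (ht : 0 ≤ t) (h : EqOn φ ψ (Icc 0 t)) : RL α φ t = RL α ψ t :=
  intervalIntegral.integral_congr fun s hs => by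
    rw [uIcc_of_le ht] at hs
    simp only [h hs]

theorem smul_RL (hα : 0 < α) (hφ : Continuous φ) (ht : 0 ≤ t) :
    t • RL α φ t = RL α (fun s => s • φ s) t + α • RL (α + 1) φ t := by
  have h1 : IntervalIntegrable (fun s => rlKernel α (t - s) • s • φ s) volume 0 t :=
    intervalIntegrable_rlKernel_smul hα (continuous_id.smul hφ) t 0 t
  have h2 : IntervalIntegrable (fun s => α • rlKernel (α + 1) (t - s) • φ s) volume 0 t :=
    (intervalIntegrable_rlKernel_smul (by linarith) hφ t 0 t).smul α
  simp only [RL_eq_integral_rlKernel, ← intervalIntegral.integral_smul]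
  rw [← intervalIntegral.integral_add h1 h2]
  refine intervalIntegral.integral_congr fun s hs => ?_
  rw [uIcc_of_le ht] at hs
  have hk := mul_rlKernel hα (sub_nonneg.2 hs.2)
  simp only [smul_smul, ← add_smul]
  congr 1
  linear_combination hk

variable [CompleteSpace E]

theorem intervalIntegrable_RL_and_integral_RL (hα : 0 < α) (hφ : Continuous φ) (ht : 0 ≤ t) :
    IntervalIntegrable (RL α φ) volume 0 t ∧ ∫ s in 0..t, RL α φ s = RL (α + 1) φ t :=
  integral_integral_triangle_swap (K := fun s r => rlKernel α (s - r)) ht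
    (measurable_rlKernel.comp (measurable_fst.sub measurable_snd))
    (fun _ _ _ hrs _ => rlKernel_nonneg hα (sub_nonneg.2 hrs.le))
    (fun r _ => intervalIntegrable_rlKernel_sub_right hα r r t)
    (fun r _ => integral_rlKernel_sub_right hα r t)
    ((continuous_rlKernel_add_one hα.le).comp (continuous_const.sub continuous_id)).continuousOn
    hφ

theorem RL_primitive (hα : 0 < α) (hφ : Continuous φ) (ht : 0 ≤ t) :
    RL α (fun s => ∫ r in 0..s, φ r) t = RL (α + 1) φ t := by
  have h := (integral_integral_triangle_swap (K := fun s _ => rlKernel α (t - s)) ht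
    (measurable_rlKernel.comp (measurable_const.sub measurable_fst))
    (fun _ _ _ _ hst => rlKernel_nonneg hα (sub_nonneg.2 hst.le))
    (fun r _ => intervalIntegrable_rlKernel_sub_left hα t r t)
    (fun r _ => integral_rlKernel_sub_left hα r t)
    ((continuous_rlKernel_add_one hα.le).comp (continuous_const.sub continuous_id)).continuousOn
    hφ).2
  simp only [intervalIntegral.integral_smul] at h
  exact h

end RiemannLiouville

section Energy

variable {H : Type*} [NormedAddCommGroup H] [InnerProductSpace ℝ H]

lemma sq_mul_norm_sq_add_le {α s c : ℝ} (hα : |α| ≤ 1) (hs : 0 ≤ s) {x y u v : H}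
    (hc : ‖v‖ ≤ c) :
    s ^ 2 * ‖x‖ ^ 2 + 2 * (s ^ 2 * ⟪y, x⟫ - s ^ 2 * ‖x‖ ^ 2 - α * s * ⟪v - u, x⟫)
        + 6 * ⟪v - u, u⟫ ≤ 3 * (s ^ 2 * ‖y‖ ^ 2 + 2 * c ^ 2) := by
  have hyx : ⟪y, x⟫ ≤ ‖y‖ * ‖x‖ := real_inner_le_norm y x
  have hvx : -(α * ⟪v - u, x⟫) ≤ (‖v‖ + ‖u‖) * ‖x‖ := by
    calc -(α * ⟪v - u, x⟫) ≤ |α| * |⟪v - u, x⟫| := by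
          rw [← abs_mul]; exact neg_le_abs _
      _ ≤ 1 * (‖v - u‖ * ‖x‖) :=
          mul_le_mul hα (abs_real_inner_le_norm _ _) (abs_nonneg _) zero_le_one
      _ ≤ (‖v‖ + ‖u‖) * ‖x‖ := by
          rw [one_mul]; gcongr; exact norm_sub_le v u
  have hvu : ⟪v - u, u⟫ = ⟪v, u⟫ - ‖u‖ ^ 2 := by
    rw [inner_sub_left, real_inner_self_eq_norm_sq]
  have hvu' : ⟪v, u⟫ ≤ ‖v‖ * ‖u‖ := real_inner_le_norm v u
  have hv : 0 ≤ ‖v‖ := norm_nonneg v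
  nlinarith [sq_nonneg (s * ‖x‖ - s * ‖y‖ - ‖v‖ - ‖u‖), sq_nonneg (s * ‖y‖ - ‖v‖),
    sq_nonneg (s * ‖y‖ - ‖u‖), sq_nonneg (‖v‖ - ‖u‖), mul_le_mul_of_nonneg_left hyx (sq_nonneg s),
    mul_le_mul_of_nonneg_left hvx hs, norm_nonneg u, norm_nonneg x, mul_self_le_mul_self hv hc]

variable [CompleteSpace H] {α : ℝ} (A : H →L[ℝ] H →L[ℝ] ℝ) {θ ρ : ℝ → H}

theorem apply_RL_add_one_eq (hα : 0 < α) (hθ : Continuous θ) (hρ : Continuous ρ) {s : ℝ}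
    (hs : 0 ≤ s) (heq : ∀ t ∈ Icc 0 s, ∀ χ : H, ⟪θ t, χ⟫ + A (RL α θ t) χ = ⟪ρ t, χ⟫)
    (χ : H) :
    A (RL (α + 1) θ s) χ = ⟪(∫ r in 0..s, ρ r) - ∫ r in 0..s, θ r, χ⟫ := by
  obtain ⟨hint, hRL⟩ := intervalIntegrable_RL_and_integral_RL hα hθ hs
  calc A (RL (α + 1) θ s) χ = ∫ u in 0..s, A (RL α θ u) χ := by
        rw [← hRL]; exact ((A.flip χ).intervalIntegral_comp_comm hint).symm
    _ = ∫ u in 0..s, innerSL ℝ χ (ρ u - θ u) := by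
        refine intervalIntegral.integral_congr fun u hu => ?_
        rw [uIcc_of_le hs] at hu
        rw [innerSL_apply_apply, real_inner_comm, inner_sub_left, ← heq u hu χ]
        ring
    _ = _ := by
        have hint' : IntervalIntegrable (fun u => ρ u - θ u) volume 0 s :=
          (hρ.intervalIntegrable 0 s).sub (hθ.intervalIntegrable 0 s)
        rw [(innerSL ℝ χ).intervalIntegral_comp_comm hint',
          intervalIntegral.integral_sub (hρ.intervalIntegrable 0 s) (hθ.intervalIntegrable 0 s),
          innerSL_apply_apply, real_inner_comm]

theorem apply_RL_smul_self (hα : 0 < α) (hθ : Continuous θ) (hρ : Continuous ρ) {s : ℝ}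
    (hs : 0 ≤ s) (heq : ∀ t ∈ Icc 0 s, ∀ χ : H, ⟪θ t, χ⟫ + A (RL α θ t) χ = ⟪ρ t, χ⟫) :
    A (RL α (fun r => r • θ r) s) (s • θ s) = s ^ 2 * ⟪ρ s, θ s⟫ - s ^ 2 * ‖θ s‖ ^ 2
      - α * s * ⟪(∫ r in 0..s, ρ r) - ∫ r in 0..s, θ r, θ s⟫ := by
  have hψ : RL α (fun r => r • θ r) s = s • RL α θ s - α • RL (α + 1) θ s :=
    eq_sub_of_add_eq (smul_RL hα hθ hs).symm
  have hθs := heq s ⟨hs, le_rfl⟩ (s • θ s)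
  simp only [hψ, map_sub, map_smul, sub_apply, smul_apply, smul_eq_mul,
    apply_RL_add_one_eq A hα hθ hρ hs heq, real_inner_smul_right, real_inner_self_eq_norm_sq] at hθs ⊢
  linear_combination s * hθs

theorem integral_sq_mul_norm_sq_le (hα0 : 0 < α) (hα1 : α ≤ 1) (hθ : Continuous θ)
    (hρ : Continuous ρ) {t : ℝ} (ht : 0 ≤ t)
    (heq : ∀ s ∈ Icc 0 t, ∀ χ : H, ⟪θ s, χ⟫ + A (RL α θ s) χ = ⟪ρ s, χ⟫)
    (hpos : ∀ ψ : ℝ → H, Continuous ψ → 0 ≤ ∫ s in 0..t, A (RL α ψ s) (ψ s)) :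
    ∫ s in 0..t, s ^ 2 * ‖θ s‖ ^ 2
      ≤ 3 * ∫ s in 0..t, (s ^ 2 * ‖ρ s‖ ^ 2 + 2 * (∫ r in 0..s, ‖ρ r‖) ^ 2) := by
  set Θ := fun s => ∫ r in 0..s, θ r
  set R := fun s => ∫ r in 0..s, ρ r
  have hΘ : Continuous Θ :=
    intervalIntegral.continuous_primitive (fun a b => hθ.intervalIntegrable a b) 0
  have hR : Continuous R :=
    intervalIntegral.continuous_primitive (fun a b => hρ.intervalIntegrable a b) 0
  have hr : Continuous fun s => ∫ r in 0..s, ‖ρ r‖ :=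
    intervalIntegral.continuous_primitive (fun a b => hρ.norm.intervalIntegrable a b) 0
  have heq' : ∀ s ∈ uIcc 0 t, ∀ u ∈ Icc 0 s, ∀ χ : H,
      ⟪θ u, χ⟫ + A (RL α θ u) χ = ⟪ρ u, χ⟫ := fun s hs u hu =>
    heq u ⟨hu.1, hu.2.trans (uIcc_of_le ht ▸ hs).2⟩
  have hposψ : 0 ≤ ∫ s in 0..t,
      (s ^ 2 * ⟪ρ s, θ s⟫ - s ^ 2 * ‖θ s‖ ^ 2 - α * s * ⟪R s - Θ s, θ s⟫) := by
    refine (hpos _ (continuous_id.smul hθ)).trans_eq (intervalIntegral.integral_congr ?_)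
    exact fun s hs => apply_RL_smul_self A hα0 hθ hρ (uIcc_of_le ht ▸ hs).1 (heq' s hs)
  have hposΘ : 0 ≤ ∫ s in 0..t, ⟪R s - Θ s, Θ s⟫ := by
    refine (hpos Θ hΘ).trans_eq (intervalIntegral.integral_congr fun s hs => ?_)
    have hs0 := (uIcc_of_le ht ▸ hs).1
    rw [show RL α Θ s = RL (α + 1) θ s from RL_primitive hα0 hθ hs0,
      apply_RL_add_one_eq A hα0 hθ hρ hs0 (heq' s hs)]
  have hc : ∀ {f : ℝ → ℝ}, Continuous f → IntervalIntegrable f volume 0 t :=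
    fun hf => hf.intervalIntegrable 0 t
  calc ∫ s in 0..t, s ^ 2 * ‖θ s‖ ^ 2
      ≤ ∫ s in 0..t, (s ^ 2 * ‖θ s‖ ^ 2
          + 2 * (s ^ 2 * ⟪ρ s, θ s⟫ - s ^ 2 * ‖θ s‖ ^ 2 - α * s * ⟪R s - Θ s, θ s⟫)
          + 6 * ⟪R s - Θ s, Θ s⟫) := by
        rw [intervalIntegral.integral_add (hc (by fun_prop)) (hc (by fun_prop)),
          intervalIntegral.integral_add (hc (by fun_prop)) (hc (by fun_prop)),
          intervalIntegral.integral_const_mul, intervalIntegral.integral_const_mul]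
        linarith
    _ ≤ ∫ s in 0..t, 3 * (s ^ 2 * ‖ρ s‖ ^ 2 + 2 * (∫ r in 0..s, ‖ρ r‖) ^ 2) :=
        intervalIntegral.integral_mono_on ht (hc (by fun_prop)) (hc (by fun_prop)) fun s hs =>
          sq_mul_norm_sq_add_le (abs_le.2 ⟨by linarith, hα1⟩) hs.1
            (intervalIntegral.norm_integral_le_integral_norm hs.1)
    _ = _ := intervalIntegral.integral_const_mul _ _

end Energy

lemma ContinuousOn.exists_continuous_eqOn_Icc {X Y : Type*} [LinearOrder X] [TopologicalSpace X]
    [OrderTopology X] [TopologicalSpace Y] {f : X → Y} {a b : X} (hab : a ≤ b)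
    (hf : ContinuousOn f (Icc a b)) : ∃ g : X → Y, Continuous g ∧ EqOn g f (Icc a b) :=
  ⟨fun x => f (projIcc a b hab x),
    hf.comp_continuous (continuous_subtype_val.comp continuous_projIcc) fun x =>
      (projIcc a b hab x).2,
    fun x hx => by simp only [projIcc_of_mem hab hx]⟩

theorem stmt_12_general {H : Type*} [NormedAddCommGroup H] [InnerProductSpace ℝ H] [CompleteSpace H]
    (α T : ℝ) (hα0 : 0 < α) (hα1 : α < 1)
    (A : H →L[ℝ] H →L[ℝ] ℝ)
    (θ ρ : ℝ → H)
    (hθ : ContinuousOn θ (Icc 0 T)) (hρ : ContinuousOn ρ (Icc 0 T))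
    (heq : ∀ t ∈ Icc (0:ℝ) T, ∀ χ : H, ⟪θ t, χ⟫ + A (RL α θ t) χ = ⟪ρ t, χ⟫)
    (hpos : ∀ ψ : ℝ → H, ContinuousOn ψ (Icc 0 T) →
      ∀ t ∈ Icc (0:ℝ) T, 0 ≤ ∫ s in (0:ℝ)..t, A (RL α ψ s) (ψ s)) :
    ∀ t ∈ Icc (0:ℝ) T,
      ∫ s in (0:ℝ)..t, s ^ 2 * ‖θ s‖ ^ 2
        ≤ 3 * ∫ s in (0:ℝ)..t,
            (s ^ 2 * ‖ρ s‖ ^ 2 + 2 * (∫ r in (0:ℝ)..s, ‖ρ r‖) ^ 2) := by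
  intro t ht
  have hsub : Icc 0 t ⊆ Icc 0 T := Icc_subset_Icc_right ht.2
  obtain ⟨θ', hθ'c, hθ'⟩ := (hθ.mono hsub).exists_continuous_eqOn_Icc ht.1
  obtain ⟨ρ', hρ'c, hρ'⟩ := (hρ.mono hsub).exists_continuous_eqOn_Icc ht.1
  have key := integral_sq_mul_norm_sq_le A hα0 hα1.le hθ'c hρ'c ht.1
    (fun s hs χ => by
      rw [hθ' hs, hρ' hs, RL_congr hs.1 (hθ'.mono (Icc_subset_Icc_right hs.2))]
      exact heq s (hsub hs) χ)
    (fun ψ hψ => hpos ψ hψ.continuousOn t ht)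
  have hρ'_primitive : ∀ s ∈ Icc 0 t, ∫ r in 0..s, ‖ρ' r‖ = ∫ r in 0..s, ‖ρ r‖ :=
    fun s hs => intervalIntegral.integral_congr fun r hr => by
      rw [hρ' (Icc_subset_Icc_right hs.2 (uIcc_of_le hs.1 ▸ hr))]
  calc ∫ s in 0..t, s ^ 2 * ‖θ s‖ ^ 2 = ∫ s in 0..t, s ^ 2 * ‖θ' s‖ ^ 2 :=
        intervalIntegral.integral_congr fun s hs => by rw [hθ' (uIcc_of_le ht.1 ▸ hs)]
    _ ≤ 3 * ∫ s in 0..t, (s ^ 2 * ‖ρ' s‖ ^ 2 + 2 * (∫ r in 0..s, ‖ρ' r‖) ^ 2) := key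
    _ = _ := by
        congr 1
        refine intervalIntegral.integral_congr fun s hs => ?_
        rw [uIcc_of_le ht.1] at hs
        rw [hρ' hs, hρ'_primitive s hs]

theorem stmt_12 {H : Type*} [NormedAddCommGroup H] [InnerProductSpace ℝ H] [CompleteSpace H]
    (α T : ℝ) (hα0 : 0 < α) (hα1 : α < 1) (hT : 0 < T)
    (A : H →L[ℝ] H →L[ℝ] ℝ)
    (θ ρ : ℝ → H)
    (hθ : ContinuousOn θ (Icc 0 T)) (hρ : ContinuousOn ρ (Icc 0 T))
    (heq : ∀ t ∈ Icc (0:ℝ) T, ∀ χ : H, ⟪θ t, χ⟫ + A (RL α θ t) χ = ⟪ρ t, χ⟫)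
    (hpos : ∀ ψ : ℝ → H, ContinuousOn ψ (Icc 0 T) →
      ∀ t ∈ Icc (0:ℝ) T, 0 ≤ ∫ s in (0:ℝ)..t, A (RL α ψ s) (ψ s)) :
    ∀ t ∈ Icc (0:ℝ) T,
      ∫ s in (0:ℝ)..t, s ^ 2 * ‖θ s‖ ^ 2
        ≤ 3 * ∫ s in (0:ℝ)..t,
            (s ^ 2 * ‖ρ s‖ ^ 2 + 2 * (∫ r in (0:ℝ)..s, ‖ρ r‖) ^ 2) :=
  stmt_12_general α T hα0 hα1 A θ ρ hθ hρ heq hpos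
end
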